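/- If E_b is a k-block deterministic block regular expression over Σ, then the ordinary regular expression E obtained by replacing each marked block [w]_i by the concatenation of its letters (then dropping marks) is k-lookahead deterministic and satisfies L(E) = L(E_b). Consequently every k-block deterministic language is k-lookahead deterministic. -/

import Mathlib

namespace BD

/-- Language-level First: symbols beginning some word of `L`. -/
def LFirst {α : Type*} (L : Set (List α)) : Set α := {x | ∃ w, x :: w ∈ L}

/-- Language-level Last. -/
def LLast {α : Type*} (L : Set (List α)) : Set α := {x | ∃ w, w ++ [x] ∈ L}

/-- Language-level Follow. -/
def LFollow {α : Type*} (L : Set (List α)) (x : α) : Set α :=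
  {y | ∃ u v, u ++ x :: y :: v ∈ L}

/-- The list of symbol occurrences of a regular expression. -/
def rchars {α : Type*} : RegularExpression α → List α
  | .zero => []
  | .epsilon => []
  | .char a => [a]
  | .plus p q => rchars p ++ rchars q
  | .comp p q => rchars p ++ rchars q
  | .star p => rchars p

/-- The Glushkov automaton of a (marked) language `L` over positions `π`,
with labelling map `f` dropping the marks. States are `Option π`, `none` being initial. -/
def glushkov {π β : Type*} (L : Set (List π)) (f : π → β) : NFA β (Option π) where
  step q b :=
    match q with
    | none => {s | ∃ y, y ∈ LFirst L ∧ f y = b ∧ s = some y}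
    | some x => {s | ∃ y, y ∈ LFollow L x ∧ f y = b ∧ s = some y}
  start := {none}
  accept := {s | ∃ y, y ∈ LLast L ∧ s = some y} ∪ {s | s = none ∧ [] ∈ L}

/-- Determinism of an automaton. -/
def Det {β σ : Type*} (A : NFA β σ) : Prop :=
  (∃ i, A.start = {i}) ∧
  ∀ p b q₁ q₂, q₁ ∈ A.step p b → q₂ ∈ A.step p b → q₁ = q₂

/-- `k`-lookahead determinism of an automaton. -/
def kLA {β σ : Type*} (A : NFA β σ) (k : ℕ) : Prop :=
  (∃ i, A.start = {i}) ∧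
  ∀ p b q₁ q₂, q₁ ∈ A.step p b → q₂ ∈ A.step p b → q₁ ≠ q₂ →
    ∀ w : List β, w.length = k - 1 → A.evalFrom {q₁} w = ∅ ∨ A.evalFrom {q₂} w = ∅

/-- `k`-block determinism of a block automaton (labels are nonempty words of length ≤ k,
single initial state, no outgoing label a prefix of another outgoing label). -/
def kBD {γ σ : Type*} (A : NFA (List γ) σ) (k : ℕ) : Prop :=
  (∃ i, A.start = {i}) ∧
  (∀ q b, (A.step q b).Nonempty → 1 ≤ b.length ∧ b.length ≤ k) ∧
  (∀ p b₁ b₂ q₁ q₂, q₁ ∈ A.step p b₁ → q₂ ∈ A.step p b₂ →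
      (b₁, q₁) ≠ (b₂, q₂) → ¬ b₁ <+: b₂)

/-- A language over `γ` is `k`-block deterministic if it is specified by a block
regular expression (given by its marked version `E` over positions `π` together with
the dropping map `f` to blocks) whose Glushkov automaton is `k`-block deterministic. -/
def IsKBlockDet {γ : Type} (L : Set (List γ)) (k : ℕ) : Prop :=
  ∃ (π : Type) (E : RegularExpression π) (f : π → List γ),
    (rchars E).Nodup ∧
    kBD (glushkov E.matches' f) k ∧
    L = {w | ∃ ws ∈ E.matches', (ws.map f).flatten = w}

/-- A language is `k`-lookahead deterministic if specified by a regular expression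
whose Glushkov automaton is `k`-lookahead deterministic. -/
def IsKLookaheadDet {γ : Type} (L : Set (List γ)) (k : ℕ) : Prop :=
  ∃ (π : Type) (E : RegularExpression π) (f : π → γ),
    (rchars E).Nodup ∧
    kLA (glushkov E.matches' f) k ∧
    L = {w | ∃ ws ∈ E.matches', ws.map f = w}

/-- A language is one-unambiguous if specified by a regular expression with
deterministic Glushkov automaton. -/
def IsOneUnambiguous {γ : Type} (L : Set (List γ)) : Prop :=
  ∃ (π : Type) (E : RegularExpression π) (f : π → γ),
    (rchars E).Nodup ∧
    Det (glushkov E.matches' f) ∧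
    L = {w | ∃ ws ∈ E.matches', ws.map f = w}

/-- Reachability in an automaton. -/
def Reach {β σ : Type*} (A : NFA β σ) (p q : σ) : Prop := ∃ w, q ∈ A.evalFrom {p} w

/-- `O` is an orbit (strongly connected component) of `A`. -/
def IsOrbit {β σ : Type*} (A : NFA β σ) (O : Set σ) : Prop :=
  ∃ q, O = {p | Reach A p q ∧ Reach A q p}

/-- A non-trivial orbit: one containing a cycle. -/
def NonTrivial {β σ : Type*} (A : NFA β σ) (O : Set σ) : Prop :=
  ∃ p ∈ O, ∃ w : List β, w ≠ [] ∧ p ∈ A.evalFrom {p} w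

/-- In-gate of an orbit. -/
def InGate {β σ : Type*} (A : NFA β σ) (O : Set σ) (q : σ) : Prop :=
  q ∈ O ∧ (q ∈ A.start ∨ ∃ p ∉ O, ∃ b, q ∈ A.step p b)

/-- Out-gate of an orbit. -/
def OutGate {β σ : Type*} (A : NFA β σ) (O : Set σ) (q : σ) : Prop :=
  q ∈ O ∧ (q ∈ A.accept ∨ ∃ p ∉ O, ∃ b, p ∈ A.step q b)

end BD

namespace BD

/-- Expansion of a marked block `x` (with underlying word `f x`) into the word of its
letter occurrences `(a, x, j)`. -/
def expand {π γ : Type*} (f : π → List γ) (x : π) : List (γ × π × ℕ) :=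
  (f x).zipIdx.map (fun p => (p.1, x, p.2))

/-- The blockwise expansion morphism `φ`. -/
def phi {π γ : Type*} (f : π → List γ) (ws : List π) : List (γ × π × ℕ) :=
  (ws.map (expand f)).flatten

/-- Dropping marks on letter occurrences. -/
def letterOf {π γ : Type*} : γ × π × ℕ → γ := fun p => p.1

variable {γ π : Type*} {f : π → List γ}

lemma phi_nil : phi f ([] : List π) = [] := rfl

lemma phi_cons (x : π) (ws : List π) : phi f (x :: ws) = expand f x ++ phi f ws := by
  simp [phi]

lemma phi_append (u v : List π) : phi f (u ++ v) = phi f u ++ phi f v := by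
  simp [phi]

lemma length_expand (x : π) : (expand f x).length = (f x).length := by simp [expand]

lemma expand_getElem (x : π) (j : ℕ) (hj : j < (f x).length) :
    (expand f x)[j]'(by simpa [length_expand] using hj) = ((f x)[j], x, j) := by
  simp [expand]

lemma map_letterOf_expand (x : π) : (expand f x).map letterOf = f x := by
  simp [expand, letterOf, List.map_map]
  exact List.zipIdx_map_fst 0 _

lemma map_letterOf_phi (ws : List π) : (phi f ws).map letterOf = (ws.map f).flatten := by
  induction ws with
  | nil => rfl
  | cons x ws ih => simp [phi_cons, ih, map_letterOf_expand]

lemma phi_getElem (ws : List π) (i : ℕ) (h : i < (phi f ws).length) :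
    ∃ ws₁ x ws₂ j, ∃ hj : j < (f x).length,
      ws = ws₁ ++ x :: ws₂ ∧ i = (phi f ws₁).length + j ∧
      (phi f ws)[i] = ((f x)[j], x, j) := by
  induction ws generalizing i with
  | nil => simp [phi] at h
  | cons x₀ ws' ih =>
    by_cases hi : i < (expand f x₀).length
    · have hj : i < (f x₀).length := by simpa [length_expand] using hi
      refine ⟨[], x₀, ws', i, hj, rfl, by simp [phi], ?_⟩
      simp only [phi_cons]
      rw [List.getElem_append_left hi]
      exact expand_getElem x₀ i hj
    · push_neg at hi
      have h' : i - (expand f x₀).length < (phi f ws').length := by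
        rw [phi_cons, List.length_append] at h; omega
      obtain ⟨ws₁, x, ws₂, j, hj, hws, hi', hget⟩ := ih (i - (expand f x₀).length) h'
      refine ⟨x₀ :: ws₁, x, ws₂, j, hj, by simp [hws], ?_, ?_⟩
      · rw [phi_cons, List.length_append]; omega
      · simp only [phi_cons]
        rw [List.getElem_append_right hi]
        exact hget

lemma phi_length_decomp (ws₁ : List π) (x : π) (ws₂ : List π) :
    (phi f (ws₁ ++ x :: ws₂)).length
      = (phi f ws₁).length + (f x).length + (phi f ws₂).length := by
  simp [phi_append, phi_cons, length_expand]
  omega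

lemma phi_getElem_eq (ws₁ : List π) (x : π) (ws₂ : List π) (j : ℕ) (hj : j < (f x).length)
    (h : (phi f ws₁).length + j < (phi f (ws₁ ++ x :: ws₂)).length) :
    (phi f (ws₁ ++ x :: ws₂))[(phi f ws₁).length + j] = ((f x)[j], x, j) := by
  simp only [phi_append, phi_cons]
  rw [List.getElem_append_right (Nat.le_add_right _ _)]
  simp only [Nat.add_sub_cancel_left]
  rw [List.getElem_append_left (by simpa [length_expand] using hj)]
  exact expand_getElem x j hj


lemma kBD_block_len {L : Set (List π)} {k : ℕ} (h : kBD (glushkov L f) k) :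
    ∀ {u : List π} {x : π} {v : List π}, u ++ x :: v ∈ L →
      1 ≤ (f x).length ∧ (f x).length ≤ k := by
  intro u x v hm
  rcases u.eq_nil_or_concat with rfl | ⟨u', z, rfl⟩
  · exact h.2.1 none (f x) ⟨some x, x, ⟨v, hm⟩, rfl, rfl⟩
  · refine h.2.1 (some z) (f x) ⟨some x, x, ⟨u', v, ?_⟩, rfl, rfl⟩
    simpa using hm

lemma consec {L : Set (List π)} {k : ℕ} (hBD : kBD (glushkov L f) k)
    {ws : List π} (hws : ws ∈ L) {u v : List (γ × π × ℕ)} {a a' : γ} {x x' : π} {j j' : ℕ}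
    (h : phi f ws = u ++ (a, x, j) :: (a', x', j') :: v) :
    ∃ hj : j < (f x).length, a = (f x)[j] ∧
      ((∃ hj1 : j + 1 < (f x).length, x' = x ∧ j' = j + 1 ∧ a' = (f x)[j+1])
        ∨ (j + 1 = (f x).length ∧ j' = 0 ∧ x' ∈ LFollow L x ∧
            ∃ h0 : 0 < (f x').length, a' = (f x')[0])) := by
  have hlen : (phi f ws).length = u.length + (v.length + 2) := by
    rw [h]; simp
  have hb1 : u.length < (phi f ws).length := by omega
  have hb2 : u.length + 1 < (phi f ws).length := by omega
  have h1 : (phi f ws)[u.length] = (a, x, j) := by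
    simp only [h]
    rw [List.getElem_append_right (le_refl _)]
    simp
  have h2 : (phi f ws)[u.length + 1] = (a', x', j') := by
    simp only [h]
    rw [List.getElem_append_right (by omega : u.length ≤ u.length + 1)]
    simp
  obtain ⟨ws₁, x₁, ws₂, j₁, hj₁, hdec, hi, hget⟩ := phi_getElem ws u.length hb1
  rw [h1] at hget
  simp only [Prod.mk.injEq] at hget
  obtain ⟨ha, rfl, rfl⟩ := hget
  subst hdec
  refine ⟨hj₁, ha, ?_⟩
  by_cases hcase : j + 1 < (f x).length
  · left
    have hb2' : (phi f ws₁).length + (j + 1) < (phi f (ws₁ ++ x :: ws₂)).length := by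
      rw [phi_length_decomp]; omega
    have hgt := phi_getElem_eq ws₁ x ws₂ (j+1) hcase hb2'
    have h2'' : (phi f (ws₁ ++ x :: ws₂))[(phi f ws₁).length + (j+1)]'hb2' = (a', x', j') := by
      simp only [show (phi f ws₁).length + (j+1) = u.length + 1 from by omega]
      exact h2
    have h2' := hgt.symm.trans h2''
    simp only [Prod.mk.injEq] at h2'
    exact ⟨hcase, h2'.2.1.symm, h2'.2.2.symm, h2'.1.symm⟩
  · right
    have hjlen : j + 1 = (f x).length := by omega
    have hlen2 : (phi f ws₂).length > 0 := by
      have := hb2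
      rw [phi_length_decomp] at this
      omega
    have hws₂ : ws₂ ≠ [] := by
      intro hnil; rw [hnil] at hlen2; simp [phi] at hlen2
    obtain ⟨x₂, ws₂', rfl⟩ := List.exists_cons_of_ne_nil hws₂
    have h02 : 0 < (f x₂).length := by
      have := kBD_block_len hBD (u := ws₁ ++ [x]) (x := x₂) (v := ws₂')
        (by simpa using hws)
      omega
    have hlx : (phi f (ws₁ ++ [x])).length = (phi f ws₁).length + (f x).length := by
      rw [phi_append]; simp [phi_cons, phi_nil, length_expand]
    have hidx : u.length + 1 = (phi f (ws₁ ++ [x])).length + 0 := by omega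
    have hb2'' : (phi f (ws₁ ++ [x])).length + 0
        < (phi f ((ws₁ ++ [x]) ++ x₂ :: ws₂')).length := by
      rw [phi_length_decomp (ws₁ ++ [x]) x₂ ws₂']; omega
    have hgt := phi_getElem_eq (ws₁ ++ [x]) x₂ ws₂' 0 h02 hb2''
    have h2'' : (phi f ((ws₁ ++ [x]) ++ x₂ :: ws₂'))[(phi f (ws₁ ++ [x])).length + 0]'hb2''
        = (a', x', j') := by
      simp only [show (ws₁ ++ [x]) ++ x₂ :: ws₂' = ws₁ ++ x :: x₂ :: ws₂' from by simp,
        show (phi f (ws₁ ++ [x])).length + 0 = u.length + 1 from hidx.symm]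
      exact h2
    have h2' := hgt.symm.trans h2''
    simp only [Prod.mk.injEq] at h2'
    obtain ⟨ha', hx', hj'⟩ := h2'
    subst hx' hj'
    exact ⟨hjlen, rfl, ⟨ws₁, ws₂', hws⟩, h02, ha'.symm⟩

lemma first_char {L : Set (List π)} {k : ℕ} (hBD : kBD (glushkov L f) k)
    {a : γ} {x : π} {j : ℕ} (h : (a, x, j) ∈ LFirst (phi f '' L)) :
    x ∈ LFirst L ∧ j = 0 ∧ ∃ h0 : 0 < (f x).length, a = (f x)[0] := by
  obtain ⟨v, w, hwL, hphi⟩ := h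
  have hb : 0 < (phi f w).length := by rw [hphi]; simp
  have h0 : (phi f w)[0] = (a, x, j) := by simp only [hphi]; simp
  obtain ⟨ws₁, x₁, ws₂, j₁, hj₁, hdec, hi, hget⟩ := phi_getElem w 0 hb
  rw [h0] at hget
  simp only [Prod.mk.injEq] at hget
  obtain ⟨ha, rfl, rfl⟩ := hget
  subst hdec
  have hj0 : j = 0 ∧ (phi f ws₁).length = 0 := by omega
  have hws₁ : ws₁ = [] := by
    rcases ws₁ with _ | ⟨z, ws₁'⟩
    · rfl
    · exfalso
      have hz : 1 ≤ (f z).length := by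
        refine (kBD_block_len hBD (u := []) (x := z) (v := ws₁' ++ x :: ws₂) ?_).1
        simpa using hwL
      have := hj0.2
      rw [phi_cons, List.length_append, length_expand] at this
      omega
  subst hws₁
  obtain ⟨hjz, -⟩ := hj0
  subst hjz
  exact ⟨⟨ws₂, by simpa using hwL⟩, rfl, hj₁, ha⟩

lemma follow_char {L : Set (List π)} {k : ℕ} (hBD : kBD (glushkov L f) k)
    {a a' : γ} {x x' : π} {j j' : ℕ}
    (h : (a', x', j') ∈ LFollow (phi f '' L) (a, x, j)) :
    ∃ hj : j < (f x).length, a = (f x)[j] ∧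
      ((∃ hj1 : j + 1 < (f x).length, x' = x ∧ j' = j + 1 ∧ a' = (f x)[j+1])
        ∨ (j + 1 = (f x).length ∧ j' = 0 ∧ x' ∈ LFollow L x ∧
            ∃ h0 : 0 < (f x').length, a' = (f x')[0])) := by
  obtain ⟨u, v, w, hwL, hphi⟩ := h
  exact consec hBD hwL hphi


lemma stepSet_mono {β σ : Type*} (A : NFA β σ) {S T : Set σ} (h : S ⊆ T) (b : β) :
    A.stepSet S b ⊆ A.stepSet T b := by
  intro s hs
  obtain ⟨t, ht, hst⟩ := A.mem_stepSet.1 hs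
  exact A.mem_stepSet.2 ⟨t, h ht, hst⟩

lemma evalFrom_mono {β σ : Type*} (A : NFA β σ) {S T : Set σ} (h : S ⊆ T) (w : List β) :
    A.evalFrom S w ⊆ A.evalFrom T w := by
  induction w generalizing S T with
  | nil => simpa [NFA.evalFrom] using h
  | cons b w ih => exact ih (stepSet_mono A h b)

lemma mem_evalFrom_split {β σ : Type*} (A : NFA β σ) {S : Set σ} {w : List β} {q : σ}
    (h : q ∈ A.evalFrom S w) : ∃ s ∈ S, q ∈ A.evalFrom {s} w := by
  induction w generalizing S with
  | nil => exact ⟨q, h, rfl⟩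
  | cons b w ih =>
    obtain ⟨s', hs', hq⟩ := ih (S := A.stepSet S b) h
    obtain ⟨s, hs, hstep⟩ := A.mem_stepSet.1 hs'
    refine ⟨s, hs, ?_⟩
    have hsub : {s'} ⊆ A.stepSet {s} b := by
      intro t ht
      rw [Set.mem_singleton_iff] at ht
      subst ht
      exact A.mem_stepSet.2 ⟨s, rfl, hstep⟩
    exact evalFrom_mono A hsub w hq

lemma evalFrom_cons_nonempty {β σ : Type*} (A : NFA β σ) {q : σ} {b : β} {w : List β}
    (h : (A.evalFrom {q} (b :: w)).Nonempty) :
    ∃ q', q' ∈ A.step q b ∧ (A.evalFrom {q'} w).Nonempty := by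
  obtain ⟨p, hp⟩ := h
  have hp' : p ∈ A.evalFrom (A.stepSet {q} b) w := hp
  obtain ⟨s, hs, hps⟩ := mem_evalFrom_split A hp'
  obtain ⟨t, ht, hstep⟩ := A.mem_stepSet.1 hs
  rw [Set.mem_singleton_iff] at ht
  subst ht
  exact ⟨s, hstep, ⟨p, hps⟩⟩

lemma block_path {L : Set (List π)} {k : ℕ} (hBD : kBD (glushkov L f) k) (w : List γ) :
    ∀ (a : γ) (x : π) (j : ℕ) (hj : j < (f x).length), a = (f x)[j] →
    ((glushkov (phi f '' L) (letterOf (π := π) (γ := γ))).evalFrom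
        {some (a, x, j)} w).Nonempty →
    (f x).drop (j+1) <+: w ∨ w.length < (f x).length - (j+1) := by
  induction w with
  | nil =>
    intro a x j hj ha _
    by_cases hlen : (f x).length ≤ j + 1
    · left
      simp [List.drop_eq_nil_iff.2 hlen]
    · right
      simp only [List.length_nil]
      omega
  | cons b w ih =>
    intro a x j hj ha hne
    obtain ⟨q', hq', hne'⟩ := evalFrom_cons_nonempty _ hne
    obtain ⟨y, hyF, hyb, rfl⟩ := hq'
    obtain ⟨a'', x'', j''⟩ := y
    obtain ⟨hj2, ha2, hcase⟩ := follow_char hBD hyF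
    rcases hcase with ⟨hj1, rfl, rfl, ha'⟩ | ⟨hlen, rfl, _, h0, ha'⟩
    · -- inner step
      have hb : b = (f x'')[j+1] := by rw [← hyb]; exact ha'
      rcases ih a'' x'' (j+1) hj1 ha' hne' with hpre | hlt
      · left
        rw [List.drop_eq_getElem_cons hj1]
        exact List.cons_prefix_cons.2 ⟨hb.symm, hpre⟩
      · right
        simp only [List.length_cons]
        omega
    · left
      rw [List.drop_eq_nil_iff.2 (le_of_eq hlen.symm)]
      exact List.nil_prefix

lemma main_clash {L : Set (List π)} {k : ℕ} (hBD : kBD (glushkov L f) k)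
    {s : Option π} {x₁ x₂ : π} (hx : x₁ ≠ x₂)
    (h1 : some x₁ ∈ (glushkov L f).step s (f x₁))
    (h2 : some x₂ ∈ (glushkov L f).step s (f x₂))
    {b : γ} (h01 : 0 < (f x₁).length) (h02 : 0 < (f x₂).length)
    (hb1 : b = (f x₁)[0]) (hb2 : b = (f x₂)[0])
    {w : List γ} (hw : w.length = k - 1)
    (hne1 : ((glushkov (phi f '' L) (letterOf (π := π) (γ := γ))).evalFrom
        {some (b, x₁, 0)} w).Nonempty)
    (hne2 : ((glushkov (phi f '' L) (letterOf (π := π) (γ := γ))).evalFrom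
        {some (b, x₂, 0)} w).Nonempty) : False := by
  have hk1 := hBD.2.1 s (f x₁) ⟨_, h1⟩
  have hk2 := hBD.2.1 s (f x₂) ⟨_, h2⟩
  have hp12 : ¬ (f x₁ <+: f x₂) := by
    refine hBD.2.2 s (f x₁) (f x₂) (some x₁) (some x₂) h1 h2 ?_
    intro hcon
    rw [Prod.mk.injEq] at hcon
    exact hx (Option.some_injective _ hcon.2)
  have hp21 : ¬ (f x₂ <+: f x₁) := by
    refine hBD.2.2 s (f x₂) (f x₁) (some x₂) (some x₁) h2 h1 ?_
    intro hcon
    rw [Prod.mk.injEq] at hcon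
    exact hx (Option.some_injective _ hcon.2).symm
  have ht1 : (f x₁).drop 1 <+: w := by
    rcases block_path hBD w b x₁ 0 h01 hb1 hne1 with h | h
    · exact h
    · omega
  have ht2 : (f x₂).drop 1 <+: w := by
    rcases block_path hBD w b x₂ 0 h02 hb2 hne2 with h | h
    · exact h
    · omega
  have e1 : f x₁ = b :: (f x₁).drop 1 := by
    conv_lhs => rw [← List.drop_zero (l := f x₁), List.drop_eq_getElem_cons h01]
    rw [hb1]
  have e2 : f x₂ = b :: (f x₂).drop 1 := by
    conv_lhs => rw [← List.drop_zero (l := f x₂), List.drop_eq_getElem_cons h02]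
    rw [hb2]
  rcases List.prefix_or_prefix_of_prefix ht1 ht2 with hp | hp
  · exact hp12 (by rw [e1, e2]; exact List.cons_prefix_cons.2 ⟨rfl, hp⟩)
  · exact hp21 (by rw [e1, e2]; exact List.cons_prefix_cons.2 ⟨rfl, hp⟩)

lemma core_kLA {L : Set (List π)} {k : ℕ} (hBD : kBD (glushkov L f) k) :
    kLA (glushkov (phi f '' L) (letterOf (π := π) (γ := γ))) k := by
  refine ⟨⟨none, rfl⟩, ?_⟩
  intro p b q₁ q₂ h1 h2 hne w hw
  by_contra hcon
  push_neg at hcon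
  obtain ⟨hc1, hc2⟩ := hcon
  cases p with
  | none =>
    obtain ⟨y₁, hF1, hb1, rfl⟩ := h1
    obtain ⟨y₂, hF2, hb2, rfl⟩ := h2
    obtain ⟨a₁, x₁, j₁⟩ := y₁
    obtain ⟨a₂, x₂, j₂⟩ := y₂
    obtain ⟨hx1F, rfl, h01, ha1⟩ := first_char hBD hF1
    obtain ⟨hx2F, rfl, h02, ha2⟩ := first_char hBD hF2
    have hba1 : a₁ = b := hb1
    have hba2 : a₂ = b := hb2
    subst hba1 hba2
    have hx : x₁ ≠ x₂ := by rintro rfl; exact hne rfl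
    exact main_clash hBD (s := none) hx
      (show some x₁ ∈ (glushkov L f).step none (f x₁) from ⟨x₁, hx1F, rfl, rfl⟩)
      (show some x₂ ∈ (glushkov L f).step none (f x₂) from ⟨x₂, hx2F, rfl, rfl⟩)
      h01 h02 ha1 ha2 hw hc1 hc2
  | some z =>
    obtain ⟨a, x, j⟩ := z
    obtain ⟨y₁, hF1, hb1, rfl⟩ := h1
    obtain ⟨y₂, hF2, hb2, rfl⟩ := h2
    obtain ⟨a₁, x₁, j₁⟩ := y₁
    obtain ⟨a₂, x₂, j₂⟩ := y₂
    obtain ⟨hj, ha, hcase1⟩ := follow_char hBD hF1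
    obtain ⟨-, -, hcase2⟩ := follow_char hBD hF2
    rcases hcase1 with ⟨hj1, rfl, rfl, ha1⟩ | ⟨hlen1, rfl, hFo1, h01, ha1⟩
    · rcases hcase2 with ⟨hj2, rfl, rfl, ha2⟩ | ⟨hlen2, rfl, hFo2, h02, ha2⟩
      · exact hne (by rw [ha1, ha2])
      · omega
    · rcases hcase2 with ⟨hj2, rfl, rfl, ha2⟩ | ⟨hlen2, rfl, hFo2, h02, ha2⟩
      · omega
      · have hba1 : a₁ = b := hb1
        have hba2 : a₂ = b := hb2
        subst hba1 hba2
        have hx : x₁ ≠ x₂ := by rintro rfl; exact hne rfl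
        exact main_clash hBD (s := some x) hx
          (show some x₁ ∈ (glushkov L f).step (some x) (f x₁) from ⟨x₁, hFo1, rfl, rfl⟩)
          (show some x₂ ∈ (glushkov L f).step (some x) (f x₂) from ⟨x₂, hFo2, rfl, rfl⟩)
          h01 h02 ha1 ha2 hw hc1 hc2


lemma lang_eq (L : Set (List π)) :
    {w | ∃ ws ∈ phi f '' L, ws.map letterOf = w} = {w | ∃ ws ∈ L, (ws.map f).flatten = w} := by
  ext w
  constructor
  · rintro ⟨-, ⟨ws, hws, rfl⟩, rfl⟩
    exact ⟨ws, hws, (map_letterOf_phi ws).symm⟩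
  · rintro ⟨ws, hws, rfl⟩
    exact ⟨phi f ws, ⟨ws, hws, rfl⟩, map_letterOf_phi ws⟩

def wordRE {β : Type*} : List β → RegularExpression β
  | [] => .epsilon
  | a :: l => .comp (.char a) (wordRE l)

lemma matches'_wordRE {β : Type*} (l : List β) : (wordRE l).matches' = {l} := by
  induction l with
  | nil =>
    show (1 : RegularExpression β).matches' = {[]}
    rw [RegularExpression.matches'_epsilon, Language.one_def]
    rfl
  | cons a l ih =>
    show ((RegularExpression.char a) * (wordRE l)).matches' = {a :: l}
    rw [RegularExpression.matches'_mul, RegularExpression.matches'_char, ih]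
    ext w
    rw [Language.mem_mul]
    constructor
    · rintro ⟨u, hu, v, hv, rfl⟩
      change u = [a] at hu; change v = l at hv
      subst hu hv
      rfl
    · intro hw
      change w = a :: l at hw
      subst hw
      exact ⟨[a], rfl, l, rfl, rfl⟩

lemma rchars_wordRE {β : Type*} (l : List β) : rchars (wordRE l) = l := by
  induction l with
  | nil => rfl
  | cons a l ih =>
    show rchars (.comp (.char a) (wordRE l)) = a :: l
    rw [rchars, rchars, ih]
    rfl

def subst (f : π → List γ) : RegularExpression π → RegularExpression (γ × π × ℕ)
  | .zero => .zero
  | .epsilon => .epsilon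
  | .char x => wordRE (expand f x)
  | .plus p q => .plus (subst f p) (subst f q)
  | .comp p q => .comp (subst f p) (subst f q)
  | .star p => .star (subst f p)

lemma phi_flatten (T : List (List π)) : phi f T.flatten = (T.map (phi f)).flatten := by
  induction T with
  | nil => rfl
  | cons t T ih => simp [phi_append, ih]

lemma matches'_subst (E : RegularExpression π) :
    (subst f E).matches' = phi f '' E.matches' := by
  induction E with
  | zero =>
    show (0 : RegularExpression (γ × π × ℕ)).matches'
        = phi f '' (0 : RegularExpression π).matches'
    rw [RegularExpression.matches'_zero, RegularExpression.matches'_zero]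
    show (∅ : Set (List (γ × π × ℕ))) = phi f '' (∅ : Set (List π))
    rw [Set.image_empty]
  | epsilon =>
    show (1 : RegularExpression (γ × π × ℕ)).matches'
        = phi f '' (1 : RegularExpression π).matches'
    rw [RegularExpression.matches'_epsilon, RegularExpression.matches'_epsilon,
      Language.one_def, Language.one_def, Set.image_singleton]
    rfl
  | char x =>
    show (wordRE (expand f x)).matches' = phi f '' (RegularExpression.char x).matches'
    rw [matches'_wordRE, RegularExpression.matches'_char]
    exact (by simp [phi_cons, phi_nil] : phi f '' ({[x]} : Set (List π)) = {expand f x}).symm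
  | plus p q ihp ihq =>
    show ((subst f p) + (subst f q)).matches' = phi f '' (p + q).matches'
    rw [RegularExpression.matches'_add, RegularExpression.matches'_add, ihp, ihq]
    exact (Set.image_union _ _ _).symm
  | comp p q ihp ihq =>
    show ((subst f p) * (subst f q)).matches' = phi f '' (p * q).matches'
    rw [RegularExpression.matches'_mul, RegularExpression.matches'_mul, ihp, ihq]
    ext w
    constructor
    · intro hw
      obtain ⟨u, ⟨u', hu', rfl⟩, v, ⟨v', hv', rfl⟩, rfl⟩ := Language.mem_mul.1 hw
      exact ⟨u' ++ v', Language.mem_mul.2 ⟨u', hu', v', hv', rfl⟩, phi_append u' v'⟩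
    · rintro ⟨t, ht, rfl⟩
      obtain ⟨u', hu', v', hv', rfl⟩ := Language.mem_mul.1 ht
      exact Language.mem_mul.2 ⟨phi f u', ⟨u', hu', rfl⟩, phi f v', ⟨v', hv', rfl⟩,
        (phi_append u' v').symm⟩
  | star p ih =>
    show (subst f p).star.matches' = phi f '' p.star.matches'
    rw [RegularExpression.matches'_star, RegularExpression.matches'_star, ih]
    have aux : ∀ S : List (List (γ × π × ℕ)), (∀ y ∈ S, y ∈ phi f '' p.matches') →
        ∃ T : List (List π), (∀ u ∈ T, u ∈ p.matches') ∧ S = T.map (phi f) := by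
      intro S
      induction S with
      | nil => exact fun _ => ⟨[], by simp, rfl⟩
      | cons s S ihS =>
        intro hS
        obtain ⟨T, hT, rfl⟩ := ihS (fun y hy => hS y (List.mem_cons_of_mem _ hy))
        obtain ⟨u, hu, rfl⟩ := hS _ (List.mem_cons_self)
        refine ⟨u :: T, ?_, rfl⟩
        intro v hv
        rw [List.mem_cons] at hv
        rcases hv with rfl | hv
        · exact hu
        · exact hT v hv
    ext w
    constructor
    · intro hw
      obtain ⟨S, rfl, hS⟩ := Language.mem_kstar.1 hw
      obtain ⟨T, hT, rfl⟩ := aux S hS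
      exact ⟨T.flatten, Language.mem_kstar.2 ⟨T, rfl, hT⟩, phi_flatten T⟩
    · rintro ⟨t, ht, rfl⟩
      obtain ⟨S, rfl, hS⟩ := Language.mem_kstar.1 ht
      refine Language.mem_kstar.2 ⟨S.map (phi f), phi_flatten S, ?_⟩
      intro y hy
      rw [List.mem_map] at hy
      obtain ⟨u, hu, rfl⟩ := hy
      exact ⟨u, hS u hu, rfl⟩

lemma rchars_subst (E : RegularExpression π) :
    rchars (subst f E) = (rchars E).flatMap (expand f) := by
  induction E with
  | zero => rfl
  | epsilon => rfl
  | char x =>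
    show rchars (wordRE (expand f x)) = _
    rw [rchars_wordRE]
    simp [rchars]
  | plus p q ihp ihq =>
    show rchars (subst f p) ++ rchars (subst f q) = _
    rw [ihp, ihq]
    show _ = (rchars p ++ rchars q).flatMap (expand f)
    simp [List.flatMap_append]
  | comp p q ihp ihq =>
    show rchars (subst f p) ++ rchars (subst f q) = _
    rw [ihp, ihq]
    show _ = (rchars p ++ rchars q).flatMap (expand f)
    simp [List.flatMap_append]
  | star p ih =>
    show rchars (subst f p) = _
    rw [ih]
    rfl

lemma nodup_expand (x : π) : (expand f x).Nodup := by
  have henum : (f x).zipIdx.Nodup := by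
    have := List.nodup_range' (s := 0) (n := (f x).length)
    rw [← List.zipIdx_map_snd] at this
    exact this.of_map _
  refine henum.map ?_
  intro p q hpq
  simp only [Prod.mk.injEq] at hpq
  exact Prod.ext hpq.1 hpq.2.2

lemma nodup_rchars_subst (E : RegularExpression π) (h : (rchars E).Nodup) :
    (rchars (subst f E)).Nodup := by
  rw [rchars_subst, List.nodup_flatMap]
  refine ⟨fun x _ => nodup_expand x, ?_⟩
  refine List.Pairwise.imp ?_ h
  intro x y hxy p hpx hpy
  simp only [expand, List.mem_map] at hpx hpy
  obtain ⟨p₁, -, rfl⟩ := hpx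
  obtain ⟨p₂, -, hp⟩ := hpy
  simp only [Prod.mk.injEq] at hp
  exact hxy hp.2.1.symm


/-- If `E_b` (given by its marked form `E` with dropping map `f`) is a `k`-block
deterministic block regular expression, then the letter-expanded expression `E`
(given by its marked language `φ(L(E♯))` with letter map) is `k`-lookahead
deterministic and specifies the same language over `Σ`; consequently every
`k`-block deterministic language is `k`-lookahead deterministic. -/
theorem stmt12 :
    (∀ (γ π : Type) (E : RegularExpression π) (f : π → List γ) (k : ℕ),
      (rchars E).Nodup → kBD (glushkov E.matches' f) k →
      kLA (glushkov (phi f '' E.matches') (letterOf (π := π) (γ := γ))) k ∧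
      {w | ∃ ws ∈ phi f '' E.matches', ws.map letterOf = w} =
        {w | ∃ ws ∈ E.matches', (ws.map f).flatten = w}) ∧
    (∀ (γ : Type) (L : Set (List γ)) (k : ℕ), IsKBlockDet L k → IsKLookaheadDet L k) := by
  have part1 : ∀ (γ π : Type) (E : RegularExpression π) (f : π → List γ) (k : ℕ),
      (rchars E).Nodup → kBD (glushkov E.matches' f) k →
      kLA (glushkov (phi f '' E.matches') (letterOf (π := π) (γ := γ))) k ∧
      {w | ∃ ws ∈ phi f '' E.matches', ws.map letterOf = w} =
        {w | ∃ ws ∈ E.matches', (ws.map f).flatten = w} := by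
    intro γ π E f k _ hbd
    exact ⟨core_kLA hbd, lang_eq _⟩
  refine ⟨part1, ?_⟩
  intro γ L k hL
  obtain ⟨π, E, f, hnd, hbd, rfl⟩ := hL
  refine ⟨γ × π × ℕ, subst f E, letterOf, nodup_rchars_subst E hnd, ?_, ?_⟩
  · rw [matches'_subst]
    exact (part1 γ π E f k hnd hbd).1
  · rw [matches'_subst]
    exact ((part1 γ π E f k hnd hbd).2).symm

end BD
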